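/- arXiv:2009.12190 — 2 statements merged into one kernel-verified Lean document; each statement's English description precedes it below -/
import Mathlib

section
/- A set D ⊆ K is a diagnosis for a DPI if and only if D hits every minimal conflict, i.e., D ∩ C ≠ ∅ for every minimal conflict C. -/
def IsConflict {α : Type*} (entails : Set α → α → Prop) (K B P N : Set α) (bot : α)
    (C : Set α) : Prop :=
  C ⊆ K ∧ ∃ x ∈ N ∪ {bot}, entails (C ∪ B ∪ P) x

def IsMinimalConflict {α : Type*} (entails : Set α → α → Prop) (K B P N : Set α) (bot : α)
    (C : Set α) : Prop :=
  IsConflict entails K B P N bot C ∧ ∀ C' ⊂ C, ¬ IsConflict entails K B P N bot C'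

def IsDiagnosis {α : Type*} (entails : Set α → α → Prop) (K B P N : Set α) (bot : α)
    (D : Set α) : Prop :=
  D ⊆ K ∧ ∀ x ∈ N ∪ {bot}, ¬ entails ((K \ D) ∪ B ∪ P) x

lemma conflict_has_minimal {α : Type*} (entails : Set α → α → Prop) (K B P N : Set α) (bot : α) :
    ∀ n (C : Set α), C.Finite → C.ncard = n → IsConflict entails K B P N bot C →
      ∃ M ⊆ C, IsMinimalConflict entails K B P N bot M := by
  intro n
  induction n using Nat.strong_induction_on with
  | _ n ih =>
    intro C hfin hn hC
    by_cases h : ∀ C' ⊂ C, ¬ IsConflict entails K B P N bot C'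
    · exact ⟨C, subset_rfl, hC, h⟩
    · push_neg at h
      obtain ⟨C', hsub, hC'⟩ := h
      have hlt : C'.ncard < n := hn ▸ Set.ncard_lt_ncard hsub hfin
      obtain ⟨M, hMC', hM⟩ := ih _ hlt C' (hfin.subset hsub.subset) rfl hC'
      exact ⟨M, hMC'.trans hsub.subset, hM⟩

/-- `D ⊆ K` is a diagnosis iff `D` hits every minimal conflict. -/
theorem diagnosis_iff_hits_all_minimal_conflicts {α : Type*}
    (entails : Set α → α → Prop) (K B P N : Set α) (bot : α)
    (hK : K.Finite)
    (mono : ∀ S S' : Set α, ∀ x : α, S ⊆ S' → entails S x → entails S' x)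
    (D : Set α) (hD : D ⊆ K) :
    IsDiagnosis entails K B P N bot D ↔
      ∀ C : Set α, IsMinimalConflict entails K B P N bot C → (D ∩ C).Nonempty := by
  constructor
  · rintro ⟨-, hdiag⟩ C ⟨⟨hCK, x, hx, hent⟩, -⟩
    by_contra hempty
    have hCKD : C ⊆ K \ D := by
      intro c hc
      refine ⟨hCK hc, fun hcD => hempty ⟨c, hcD, hc⟩⟩
    exact hdiag x hx (mono _ _ x (by gcongr) hent)
  · intro hhit
    refine ⟨hD, fun x hx hent => ?_⟩
    have hconf : IsConflict entails K B P N bot (K \ D) :=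
      ⟨Set.diff_subset, x, hx, hent⟩
    obtain ⟨M, hMsub, hMmin⟩ :=
      conflict_has_minimal entails K B P N bot _ _ (hK.subset Set.diff_subset) rfl hconf
    obtain ⟨c, hcD, hcM⟩ := hhit M hMmin
    exact (hMsub hcM).2 hcD
end

section
/- Hitting Set Property: D ⊆ K is a minimal diagnosis for a DPI if and only if D is a minimal hitting set of the collection of all minimal conflicts for the DPI. -/
def IsMinimalDiagnosis {α : Type*} (entails : Set α → α → Prop) (K B P N : Set α) (bot : α)
    (D : Set α) : Prop :=
  IsDiagnosis entails K B P N bot D ∧ ∀ D' ⊂ D, ¬ IsDiagnosis entails K B P N bot D'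

/-- `X` is a hitting set of collection `S`. -/
def IsHittingSet {α : Type*} (X : Set α) (S : Set (Set α)) : Prop :=
  X ⊆ ⋃₀ S ∧ ∀ s ∈ S, (X ∩ s).Nonempty

def IsMinimalHittingSet {α : Type*} (X : Set α) (S : Set (Set α)) : Prop :=
  IsHittingSet X S ∧ ∀ X' ⊂ X, ¬ IsHittingSet X' S

/-- Every finite conflict contains a minimal conflict. -/
lemma exists_min_conflict_aux {α : Type*} (entails : Set α → α → Prop) (K B P N : Set α)
    (bot : α) :
    ∀ n (C : Set α), C.Finite → C.ncard ≤ n → IsConflict entails K B P N bot C →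
      ∃ M, M ⊆ C ∧ IsMinimalConflict entails K B P N bot M := by
  intro n
  induction n with
  | zero =>
    intro C hf hc hC
    have hCe : C = ∅ := by
      have : C.ncard = 0 := Nat.le_zero.mp hc
      exact (Set.ncard_eq_zero hf).mp this
    refine ⟨C, subset_rfl, hC, ?_⟩
    intro C' hC' _
    rw [hCe] at hC'
    exact hC'.2 (Set.empty_subset C')
  | succ n ih =>
    intro C hf hc hC
    by_cases h : ∀ C' ⊂ C, ¬ IsConflict entails K B P N bot C'
    · exact ⟨C, subset_rfl, hC, h⟩
    · push_neg at h
      obtain ⟨C', hsub, hC'⟩ := h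
      have hlt := Set.ncard_lt_ncard hsub hf
      obtain ⟨M, hM, hMm⟩ := ih C' (hf.subset hsub.subset) (by omega) hC'
      exact ⟨M, hM.trans hsub.subset, hMm⟩

lemma exists_min_conflict {α : Type*} {entails : Set α → α → Prop} {K B P N : Set α}
    {bot : α} (hK : K.Finite) {C : Set α} (hC : IsConflict entails K B P N bot C) :
    ∃ M, M ⊆ C ∧ IsMinimalConflict entails K B P N bot M :=
  exists_min_conflict_aux entails K B P N bot C.ncard C (hK.subset hC.1) le_rfl hC

/-- Hitting Set Property: `D ⊆ K` is a minimal diagnosis iff `D` is a minimal hitting set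
of the collection of all minimal conflicts. -/
theorem minimal_diagnosis_iff_minimal_hitting_set {α : Type*}
    (entails : Set α → α → Prop) (K B P N : Set α) (bot : α)
    (hK : K.Finite)
    (mono : ∀ S S' : Set α, ∀ x : α, S ⊆ S' → entails S x → entails S' x)
    (D : Set α) (hD : D ⊆ K) :
    IsMinimalDiagnosis entails K B P N bot D ↔
      IsMinimalHittingSet D {C : Set α | IsMinimalConflict entails K B P N bot C} := by
  -- helper: if X is a diagnosis, no conflict is ⊆ K \ X
  have diag_no_conflict : ∀ X C : Set α, IsDiagnosis entails K B P N bot X →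
      C ⊆ K \ X → ¬ IsConflict entails K B P N bot C := by
    rintro X C ⟨_, hX⟩ hsub ⟨_, x, hx, hent⟩
    exact hX x hx (mono _ _ x
      (Set.union_subset_union_left _ (Set.union_subset_union_left _ hsub)) hent)
  -- helper: if X hits every minimal conflict and X ⊆ K, X is a diagnosis
  have hit_diag : ∀ X : Set α, X ⊆ K →
      (∀ C, IsMinimalConflict entails K B P N bot C → (X ∩ C).Nonempty) →
      IsDiagnosis entails K B P N bot X := by
    intro X hXK hhit
    refine ⟨hXK, ?_⟩
    intro x hx hent
    have hconf : IsConflict entails K B P N bot (K \ X) :=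
      ⟨Set.diff_subset, x, hx, hent⟩
    obtain ⟨M, hMsub, hMm⟩ := exists_min_conflict hK hconf
    obtain ⟨a, haX, haM⟩ := hhit M hMm
    exact (hMsub haM).2 haX
  constructor
  · rintro ⟨hDdiag, hDmin⟩
    have hhit : ∀ C ∈ {C : Set α | IsMinimalConflict entails K B P N bot C},
        (D ∩ C).Nonempty := by
      intro C hC
      by_contra hne
      rw [Set.not_nonempty_iff_eq_empty] at hne
      have hsub : C ⊆ K \ D := fun c hc =>
        ⟨hC.1.1 hc, fun hcD => Set.eq_empty_iff_forall_notMem.mp hne c ⟨hcD, hc⟩⟩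
      exact diag_no_conflict D C hDdiag hsub hC.1
    refine ⟨⟨?_, hhit⟩, ?_⟩
    · -- D ⊆ ⋃₀ S
      intro d hd
      have hss : D \ {d} ⊂ D := Set.sdiff_singleton_ssubset.mpr hd
      have hnd := hDmin _ hss
      rw [IsDiagnosis] at hnd
      push_neg at hnd
      obtain ⟨x, hx, hent⟩ := hnd ((Set.diff_subset).trans hD)
      have hconf : IsConflict entails K B P N bot (K \ (D \ {d})) :=
        ⟨Set.diff_subset, x, hx, hent⟩
      obtain ⟨M, hMsub, hMm⟩ := exists_min_conflict hK hconf
      have hdM : d ∈ M := by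
        by_contra hdM
        have : M ⊆ K \ D := by
          intro m hm
          have := hMsub hm
          refine ⟨this.1, fun hmD => this.2 ⟨hmD, fun he => hdM (he ▸ hm)⟩⟩
        exact diag_no_conflict D M hDdiag this hMm.1
      exact ⟨M, hMm, hdM⟩
    · intro D' hsub hHS
      exact hDmin D' hsub (hit_diag D' (hsub.subset.trans hD)
        (fun C hC => by
          obtain ⟨a, ha⟩ := hHS.2 C hC
          exact ⟨a, ha⟩))
  · rintro ⟨⟨hUn, hHit⟩, hmin⟩
    have hDdiag : IsDiagnosis entails K B P N bot D :=
      hit_diag D hD (fun C hC => hHit C hC)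
    refine ⟨hDdiag, ?_⟩
    intro D' hsub hdiag
    apply hmin D' hsub
    refine ⟨hsub.subset.trans hUn, ?_⟩
    intro C hC
    by_contra hne
    rw [Set.not_nonempty_iff_eq_empty] at hne
    have hsubC : C ⊆ K \ D' := fun c hc =>
      ⟨hC.1.1 hc, fun hcD => Set.eq_empty_iff_forall_notMem.mp hne c ⟨hcD, hc⟩⟩
    exact diag_no_conflict D' C hdiag hsubC hC.1
end
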